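/- arXiv:2210.12325 — 3 statements merged into one kernel-verified Lean document; each statement's English description precedes it below -/
import Mathlib

section
/- For all integers n ≥ 1 and k ≥ 1, the numbers Λ(n,k) of permutations of [n] with exactly k up-down runs satisfy the recurrence Λ(n,k) = k·Λ(n−1,k) + Λ(n−1,k−1) + (n−k+1)·Λ(n−1,k−2). -/
/-- The `i`-th entry (1-indexed) of the permutation `σ` of `[n]`, with the
convention that positions `0` and `> n` carry the entry `0`. -/
def permEntry (n : ℕ) (σ : Equiv.Perm (Fin n)) (i : ℕ) : ℕ :=
  if h : 1 ≤ i ∧ i ≤ n then ((σ ⟨i - 1, by omega⟩ : Fin n) : ℕ) + 1 else 0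

/-- The number of left peaks of `σ`: indices `1 ≤ i ≤ n-1` with
`σ_{i-1} < σ_i > σ_{i+1}`, convention `σ₀ = 0`. -/
def leftPeakCount (n : ℕ) (σ : Equiv.Perm (Fin n)) : ℕ :=
  ((Finset.Icc 1 (n - 1)).filter fun i =>
    permEntry n σ (i - 1) < permEntry n σ i ∧ permEntry n σ (i + 1) < permEntry n σ i).card

/-- The number of exterior peaks of `σ`: indices `1 ≤ i ≤ n` with
`σ_{i-1} < σ_i > σ_{i+1}`, conventions `σ₀ = σ_{n+1} = 0`. -/
def extPeakCount (n : ℕ) (σ : Equiv.Perm (Fin n)) : ℕ :=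
  ((Finset.Icc 1 n).filter fun i =>
    permEntry n σ (i - 1) < permEntry n σ i ∧ permEntry n σ (i + 1) < permEntry n σ i).card

/-- The number of interior peaks of `σ`: indices `2 ≤ i ≤ n-1` with
`σ_{i-1} < σ_i > σ_{i+1}`. -/
def intPeakCount (n : ℕ) (σ : Equiv.Perm (Fin n)) : ℕ :=
  ((Finset.Icc 2 (n - 1)).filter fun i =>
    permEntry n σ (i - 1) < permEntry n σ i ∧ permEntry n σ (i + 1) < permEntry n σ i).card

/-- The number of up-down runs of `σ`: maximal monotone segments of the
extended sequence `0, σ₁, …, σₙ`, i.e. one more than the number of direction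
changes of that sequence (and `0` for `n = 0`). -/
def udRunCount (n : ℕ) (σ : Equiv.Perm (Fin n)) : ℕ :=
  if n = 0 then 0 else
    1 + ((Finset.Icc 1 (n - 1)).filter fun i =>
      (permEntry n σ (i - 1) < permEntry n σ i ∧ permEntry n σ (i + 1) < permEntry n σ i) ∨
      (permEntry n σ i < permEntry n σ (i - 1) ∧ permEntry n σ i < permEntry n σ (i + 1))).card

/-- The number of alternating runs of `σ`: maximal monotone segments of
`σ₁, …, σₙ`, i.e. one more than the number of direction changes (and `0` for `n = 0`). -/
def altRunCount (n : ℕ) (σ : Equiv.Perm (Fin n)) : ℕ :=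
  if n = 0 then 0 else
    1 + ((Finset.Icc 2 (n - 1)).filter fun i =>
      (permEntry n σ (i - 1) < permEntry n σ i ∧ permEntry n σ (i + 1) < permEntry n σ i) ∨
      (permEntry n σ i < permEntry n σ (i - 1) ∧ permEntry n σ i < permEntry n σ (i + 1))).card

/-- `L n k` : the number of permutations of `[n]` with exactly `k` left peaks. -/
def leftPeakNum (n k : ℕ) : ℕ :=
  (Finset.univ.filter fun σ : Equiv.Perm (Fin n) => leftPeakCount n σ = k).card

/-- `W n k` : the number of permutations of `[n]` with exactly `k` exterior peaks. -/
def extPeakNum (n k : ℕ) : ℕ :=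
  (Finset.univ.filter fun σ : Equiv.Perm (Fin n) => extPeakCount n σ = k).card

/-- `M n k` : the number of permutations of `[n]` with exactly `k` interior peaks. -/
def intPeakNum (n k : ℕ) : ℕ :=
  (Finset.univ.filter fun σ : Equiv.Perm (Fin n) => intPeakCount n σ = k).card

/-- `Λ n k` : the number of permutations of `[n]` with exactly `k` up-down runs. -/
def udRunNum (n k : ℕ) : ℕ :=
  (Finset.univ.filter fun σ : Equiv.Perm (Fin n) => udRunCount n σ = k).card

/-- `R n k` : the number of permutations of `[n]` with exactly `k` alternating runs. -/
def altRunNum (n k : ℕ) : ℕ :=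
  (Finset.univ.filter fun σ : Equiv.Perm (Fin n) => altRunCount n σ = k).card

/-- `Λ(n,k)` for an integer `k`: the number of permutations of `[n]` with exactly `k`
up-down runs (in particular `0` when `k < 0`). -/
def udRunNumZ (n : ℕ) (k : ℤ) : ℕ :=
  (Finset.univ.filter fun σ : Equiv.Perm (Fin n) => (udRunCount n σ : ℤ) = k).card

/-!
Every permutation of `[m + 1]` arises exactly once by inserting the maximum `m + 1` into a
permutation `τ` of `[m]`. Encode `0, τ₁, …, τₘ` by its word of ascents and descents, which begins
with an ascent; the number of up-down runs is one more than the number of changes of letter.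
Inserting the maximum replaces one letter by an ascent followed by a descent (or appends an ascent),
and a local inspection shows that this adds no change at `r` of the `m + 1` positions, one change
at the position closing the word, and two changes at the remaining `m - r` positions, where `r` is
the number of runs of `τ`. Summing over `τ` gives the recurrence.
-/

open Finset Equiv

def turns (l : ℕ) (w : ℕ → Bool) : ℕ :=
  ∑ i ∈ range l, (w i ^^ w (i + 1)).toNat

lemma turns_succ (l : ℕ) (w : ℕ → Bool) :
    turns (l + 1) w = turns l w + (w l ^^ w (l + 1)).toNat :=
  sum_range_succ _ _

lemma turns_congr {l : ℕ} {u v : ℕ → Bool} (h : ∀ i ≤ l, u i = v i) : turns l u = turns l v :=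
  sum_congr rfl fun i hi => by
    rw [mem_range] at hi
    rw [h i hi.le, h (i + 1) hi]

def insertAt {α : Type*} (q : ℕ) (c : α) (w : ℕ → α) : ℕ → α :=
  fun i => if i < q then w i else if i = q then c else w (i - 1)

section insertAt

variable {α : Type*} {q i : ℕ} {c : α} {w : ℕ → α}

lemma insertAt_of_lt (h : i < q) : insertAt q c w i = w i := if_pos h

lemma insertAt_self : insertAt q c w q = c := by simp [insertAt]

lemma insertAt_succ_of_le (h : q ≤ i) : insertAt q c w (i + 1) = w i := by
  rw [insertAt, if_neg (by omega), if_neg (by omega), Nat.add_sub_cancel]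

end insertAt

lemma turns_insertAt_last (l : ℕ) (c : Bool) (w : ℕ → Bool) :
    turns (l + 1) (insertAt (l + 1) c w) = turns l w + (w l ^^ c).toNat := by
  rw [turns_succ, turns_congr fun i hi => insertAt_of_lt (by omega), insertAt_of_lt (by omega),
    insertAt_self]

lemma turns_insertAt {p l : ℕ} (hpl : p < l) (c : Bool) (w : ℕ → Bool) :
    turns (l + 1) (insertAt (p + 1) c w) + (w p ^^ w (p + 1)).toNat
      = turns l w + (w p ^^ c).toNat + (c ^^ w (p + 1)).toNat := by
  induction l, hpl using Nat.le_induction with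
  | base =>
    rw [turns_succ, turns_insertAt_last, turns_succ, insertAt_self,
      insertAt_succ_of_le le_rfl]
    ring
  | succ l hpl ih =>
    rw [turns_succ (l + 1), turns_succ l w, insertAt_succ_of_le (by omega),
      insertAt_succ_of_le (by omega)]
    omega

def insertPeak (j : ℕ) (w : ℕ → Bool) : ℕ → Bool :=
  fun i => if i < j then w i else if i = j then false else if i = j + 1 then true else w (i - 1)

lemma insertPeak_of_false {j : ℕ} {w : ℕ → Bool} (h : w j = false) :
    insertPeak j w = insertAt (j + 1) true w := by
  funext i
  simp only [insertPeak, insertAt]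
  split_ifs <;> grind

lemma insertPeak_of_true {j : ℕ} {w : ℕ → Bool} (h : w j = true) :
    insertPeak j w = insertAt j false w := by
  funext i
  simp only [insertPeak, insertAt]
  split_ifs <;> grind

def peakGain (l : ℕ) (w : ℕ → Bool) (j : ℕ) : ℕ :=
  if j = l + 1 then (w l).toNat
  else if w j then (if w (j - 1) then 2 else 0)
  else if j = l then 1
  else if w (j + 1) then 0 else 2

lemma turns_insertPeak {l j : ℕ} {w : ℕ → Bool} (hw : w 0 = false) (hj : j ≤ l + 1) :
    turns (l + 1) (insertPeak j w) = turns l w + peakGain l w j := by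
  rcases hj.lt_or_eq with hj | rfl
  · cases hwj : w j
    · rw [insertPeak_of_false hwj]
      rcases (Nat.lt_succ_iff.mp hj).lt_or_eq with hjl | rfl
      · have := turns_insertAt hjl true w
        cases hwj' : w (j + 1) <;>
          simp [peakGain, hwj, hwj', show j ≠ l + 1 by omega, show j ≠ l by omega] at this ⊢ <;>
          omega
      · simp [turns_insertAt_last, peakGain, hwj]
    · rcases j with _ | p
      · simp [hw] at hwj
      rw [insertPeak_of_true hwj]
      have := turns_insertAt (show p < l by omega) false w
      cases hwp : w p <;> simp [peakGain, hwj, hwp, show p ≠ l by omega] at this ⊢ <;> omega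
  · have agree : ∀ i ≤ l + 1, insertPeak (l + 1) w i = insertAt (l + 1) false w i := by
      intro i hi
      rcases hi.lt_or_eq with hi | rfl
      · rw [insertPeak, if_pos hi, insertAt_of_lt hi]
      · rw [insertPeak, if_neg (lt_irrefl _), if_pos rfl, insertAt_self]
    rw [turns_congr agree, turns_insertAt_last]
    simp [peakGain]

lemma peakGain_succ_of_lt {l j : ℕ} (w : ℕ → Bool) (h : j < l) :
    peakGain (l + 1) w j = peakGain l w j := by
  simp only [peakGain, if_neg (show j ≠ l + 1 + 1 by omega), if_neg (show j ≠ l + 1 by omega),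
    if_neg (show j ≠ l by omega)]

lemma sum_peakGain {w : ℕ → Bool} (hw : w 0 = false) (f : ℕ → ℤ) (l : ℕ) :
    ∑ j ∈ range (l + 2), f (peakGain l w j)
      = (turns l w + 1) * f 0 + f 1 + (l - turns l w) * f 2 := by
  induction l with
  | zero => simp [sum_range_succ, peakGain, hw, turns]; ring
  | succ l ih =>
    rw [sum_range_succ, sum_range_succ] at ih
    rw [sum_range_succ, sum_range_succ, sum_range_succ,
      sum_congr rfl fun j hj => by rw [peakGain_succ_of_lt w (mem_range.mp hj)], turns_succ]
    generalize ∑ j ∈ range l, f (peakGain l w j) = S at ih ⊢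
    cases hl : w l <;> cases hl' : w (l + 1) <;>
      simp [peakGain, hl, hl', show l ≠ l + 1 + 1 by omega] at ih ⊢ <;>
      linear_combination ih

lemma permEntry_zero (n : ℕ) (σ : Perm (Fin n)) : permEntry n σ 0 = 0 := rfl

lemma permEntry_succ {n : ℕ} (σ : Perm (Fin n)) (i : Fin n) :
    permEntry n σ (i + 1) = σ i + 1 := by
  simp [permEntry, Nat.succ_le_of_lt i.isLt]

lemma permEntry_of_lt {n i : ℕ} (σ : Perm (Fin n)) (h : n < i) : permEntry n σ i = 0 := by
  simp [permEntry]
  omega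

lemma permEntry_lt (n : ℕ) (σ : Perm (Fin n)) (i : ℕ) : permEntry n σ i < n + 1 := by
  unfold permEntry
  split_ifs <;> omega

lemma permEntry_ne_succ {n i : ℕ} (σ : Perm (Fin n)) (h : i < n) :
    permEntry n σ i ≠ permEntry n σ (i + 1) := by
  rw [permEntry_succ σ ⟨i, h⟩]
  rcases i with _ | i
  · simp [permEntry_zero]
  · rw [permEntry_succ σ ⟨i, by omega⟩, ne_eq, add_left_inj, Fin.val_inj, σ.apply_eq_iff_eq]
    simp

def descents (e : ℕ → ℕ) : ℕ → Bool := fun i => decide (e (i + 1) < e i)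

lemma descents_permEntry_zero (n : ℕ) (σ : Perm (Fin n)) : descents (permEntry n σ) 0 = false := by
  simp [descents, permEntry_zero]

lemma toNat_decide_lt_xor {a b c : ℕ} (hab : a ≠ b) (hbc : b ≠ c) :
    (decide (b < a) ^^ decide (c < b)).toNat = if a < b ∧ c < b ∨ b < a ∧ b < c then 1 else 0 := by
  by_cases h : b < a <;> by_cases h' : c < b <;> simp [h, h'] <;> omega

lemma udRunCount_eq_turns (l : ℕ) (σ : Perm (Fin (l + 1))) :
    udRunCount (l + 1) σ = turns l (descents (permEntry (l + 1) σ)) + 1 := by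
  rw [udRunCount, if_neg (by omega), add_comm, Nat.add_sub_cancel, card_filter,
    ← Ico_add_one_right_eq_Icc, ← sum_Ico_add' _ 0 l 1, ← range_eq_Ico, turns]
  refine congrArg (· + 1) (sum_congr rfl fun i hi => ?_)
  rw [mem_range] at hi
  rw [descents, descents, toNat_decide_lt_xor (permEntry_ne_succ σ (by omega))
    (permEntry_ne_succ σ (by omega)), Nat.add_sub_cancel]

lemma descents_insertAt {e : ℕ → ℕ} {M : ℕ} (he : ∀ i, e i < M) (p : ℕ) :
    descents (insertAt (p + 1) M e) = insertPeak p (descents e) := by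
  funext i
  rcases lt_trichotomy i p with h | rfl | h
  · rw [descents, insertAt_of_lt (by omega), insertAt_of_lt (by omega), insertPeak, if_pos h]; rfl
  · rw [descents, insertAt_self, insertAt_of_lt (by omega), insertPeak, if_neg (by omega),
      if_pos rfl]
    simpa using (he i).le
  · obtain ⟨i, rfl⟩ := Nat.exists_eq_add_of_lt h
    rcases Nat.eq_zero_or_pos i with rfl | hi
    · rw [descents, insertAt_succ_of_le le_rfl, insertAt_self, insertPeak, if_neg (by omega),
        if_neg (by omega), if_pos rfl]
      simpa using he _
    · rw [descents, insertAt_succ_of_le (by omega), insertAt_succ_of_le (by omega), insertPeak,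
        if_neg (by omega), if_neg (by omega), if_neg (by omega)]
      rfl

/-- The permutation of `[m + 1]` obtained from `τ` by inserting the maximum `m + 1` at
position `p` (counted from `0`). -/
def insertMax (m : ℕ) (p : Fin (m + 1)) (τ : Perm (Fin m)) : Perm (Fin (m + 1)) :=
  (finSuccEquiv' p).trans ((Equiv.optionCongr τ).trans (finSuccEquiv' (Fin.last m)).symm)

section insertMax

variable {m : ℕ} (p : Fin (m + 1)) (τ : Perm (Fin m))

lemma insertMax_apply_self : insertMax m p τ p = Fin.last m := by
  simp [insertMax]

lemma insertMax_apply_succAbove (j : Fin m) :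
    insertMax m p τ (p.succAbove j) = (τ j).castSucc := by
  simp [insertMax, Fin.succAbove_last]

lemma permEntry_insertMax :
    permEntry (m + 1) (insertMax m p τ) = insertAt (p + 1) (m + 1) (permEntry m τ) := by
  funext i
  rcases i with _ | i
  · rfl
  by_cases hi : i < m + 1
  · obtain ⟨k, rfl⟩ : ∃ k : Fin (m + 1), (k : ℕ) = i := ⟨⟨i, hi⟩, rfl⟩
    rw [permEntry_succ]
    rcases Fin.eq_self_or_eq_succAbove p k with rfl | ⟨j, rfl⟩
    · rw [insertMax_apply_self, insertAt_self, Fin.val_last]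
    · rw [insertMax_apply_succAbove, Fin.val_castSucc]
      rcases lt_or_ge j.castSucc p with hjp | hjp
      · rw [Fin.succAbove_of_castSucc_lt _ _ hjp, Fin.val_castSucc,
          insertAt_of_lt (by simpa [Fin.lt_def] using hjp), permEntry_succ]
      · rw [Fin.succAbove_of_le_castSucc _ _ hjp, Fin.val_succ,
          insertAt_succ_of_le (by simpa [Fin.le_def] using hjp), permEntry_succ]
  · rw [permEntry_of_lt _ (by omega), insertAt_succ_of_le (by omega), permEntry_of_lt _ (by omega)]

lemma insertMax_symm_last : (insertMax m p τ).symm (Fin.last m) = p := by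
  rw [Equiv.symm_apply_eq, insertMax_apply_self]

end insertMax

lemma insertMax_bijective (m : ℕ) :
    Function.Bijective fun x : Fin (m + 1) × Perm (Fin m) => insertMax m x.1 x.2 := by
  refine (Fintype.bijective_iff_injective_and_card _).mpr ⟨?_, by
    simp [Fintype.card_perm, Nat.factorial_succ]⟩
  rintro ⟨p, τ⟩ ⟨p', τ'⟩ h
  dsimp only at h
  obtain rfl : p = p' := by rw [← insertMax_symm_last p τ, h, insertMax_symm_last]
  refine Prod.ext rfl (Equiv.ext fun j => Fin.castSucc_injective m ?_)
  rw [← insertMax_apply_succAbove, h, insertMax_apply_succAbove]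

lemma sum_perm_eq_sum_insertMax {M : Type*} [AddCommMonoid M] (m : ℕ)
    (g : Perm (Fin (m + 1)) → M) : ∑ σ, g σ = ∑ τ, ∑ p, g (insertMax m p τ) := by
  rw [← Fintype.sum_bijective _ (insertMax_bijective m) _ g fun _ => rfl, Fintype.sum_prod_type,
    sum_comm]

lemma udRunCount_insertMax (l : ℕ) (p : Fin (l + 2)) (τ : Perm (Fin (l + 1))) :
    udRunCount (l + 2) (insertMax (l + 1) p τ)
      = udRunCount (l + 1) τ + peakGain l (descents (permEntry (l + 1) τ)) p := by
  rw [udRunCount_eq_turns, permEntry_insertMax, descents_insertAt (permEntry_lt _ τ),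
    turns_insertPeak (descents_permEntry_zero _ τ) (Nat.lt_succ_iff.mp p.isLt), udRunCount_eq_turns]
  ring

lemma sum_udRunCount_insertMax (m : ℕ) (τ : Perm (Fin m)) (f : ℕ → ℤ) :
    ∑ p, f (udRunCount (m + 1) (insertMax m p τ))
      = udRunCount m τ * f (udRunCount m τ) + f (udRunCount m τ + 1)
        + (m - udRunCount m τ) * f (udRunCount m τ + 2) := by
  rcases m with _ | l
  · simp [udRunCount]
  · simp_rw [udRunCount_insertMax]
    rw [Fin.sum_univ_eq_sum_range (fun j => f (udRunCount (l + 1) τ + peakGain l _ j)),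
      sum_peakGain (descents_permEntry_zero _ τ) (fun g => f (udRunCount (l + 1) τ + g)),
      udRunCount_eq_turns]
    push_cast
    ring

lemma udRunNumZ_eq_sum (n : ℕ) (k : ℤ) :
    (udRunNumZ n k : ℤ) = ∑ σ : Perm (Fin n), if (udRunCount n σ : ℤ) = k then 1 else 0 :=
  (sum_boole _ _).symm

theorem stmt_13_general (n : ℕ) (hn : 1 ≤ n) (k : ℤ) :
    (udRunNumZ n k : ℤ)
      = k * udRunNumZ (n - 1) k + udRunNumZ (n - 1) (k - 1)
          + ((n : ℤ) - k + 1) * udRunNumZ (n - 1) (k - 2) := by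
  obtain ⟨m, rfl⟩ := Nat.exists_eq_add_of_le' hn
  simp only [udRunNumZ_eq_sum, sum_perm_eq_sum_insertMax, mul_sum, ← sum_add_distrib,
    Nat.add_sub_cancel]
  refine sum_congr rfl fun τ _ => ?_
  rw [sum_udRunCount_insertMax m τ fun r => if (r : ℤ) = k then 1 else 0]
  push_cast
  split_ifs <;> omega

/-- for `n, k ≥ 1`,
`Λ(n,k) = k·Λ(n−1,k) + Λ(n−1,k−1) + (n−k+1)·Λ(n−1,k−2)`. -/
theorem stmt_13 (n : ℕ) (hn : 1 ≤ n) (k : ℤ) (hk : 1 ≤ k) :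
    (udRunNumZ n k : ℤ)
      = k * udRunNumZ (n - 1) k + udRunNumZ (n - 1) (k - 1)
          + ((n : ℤ) - k + 1) * udRunNumZ (n - 1) (k - 2) :=
  stmt_13_general n hn k
end

section
/- For every n ≥ 0, R_n(x) = Σ_{k=0}^{n} C(n,k)·Λ_k(x)·Λ_{n−k}(x), where C(n,k) is the binomial coefficient; equivalently, the exponential generating function of the alternating-run polynomials R_n(x) is the square of the exponential generating function of the up-down run polynomials Λ_n(x). -/
/-- The up-down run polynomial `Λ_n(x) = Σ_k Λ(n,k)·x^k` (so `Λ_0(x) = 1`). -/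
noncomputable def UDpoly (n : ℕ) : Polynomial ℚ :=
  ∑ k ∈ Finset.range (n + 1), (udRunNum n k : Polynomial ℚ) * Polynomial.X ^ k

/-- The alternating-run polynomial `R_n(x) = Σ_{k=1}^{n} R(n+1,k)·x^k`, with `R_0(x) = 1`. -/
noncomputable def Rpoly (n : ℕ) : Polynomial ℚ :=
  if n = 0 then 1 else
    ∑ k ∈ Finset.Icc 1 n, (altRunNum (n + 1) k : Polynomial ℚ) * Polynomial.X ^ k

/-!
Let `π` be a permutation of `[n + 1]` whose maximum sits at position `k + 1`. Read the `k`
entries to the left of the maximum from right to left and the `n - k` entries to its right from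
left to right, and complement both (so that the maximum plays the role of the leading `0`).
Standardising, `π` corresponds bijectively to a `k`-subset of `[n]` (the values on the left)
together with a permutation `τ` of `[k]` and a permutation `ρ` of `[n - k]`. Complementing and
reversing preserve turning points, so the turning points of `π` are those of `0, τ`, those of
`0, ρ`, and the maximum itself when it is interior; counting runs as turning points plus one
gives `alt(π) = ud(τ) + ud(ρ)`. Summing over `π` yields `R_n = Σ_k C(n,k) Λ_k Λ_{n-k}`, which
is the coefficient identity for the product of exponential generating functions.
-/

open Finset Function Equiv Polynomial

-- `abbrev`s, so that `udRunCount` and `altRunCount` unfold to `turnCount` by `rfl`.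
abbrev IsTurn {α : Type*} [LT α] (a b c : α) : Prop := (a < b ∧ c < b) ∨ (b < a ∧ b < c)

theorem isTurn_comm {α : Type*} [LT α] {a b c : α} : IsTurn a b c ↔ IsTurn c b a := by
  unfold IsTurn; tauto

theorem StrictAntiOn.isTurn_iff {α β : Type*} [LinearOrder α] [Preorder β] {a b c : α}
    {g : α → β} {s : Set α} (hg : StrictAntiOn g s) (ha : a ∈ s) (hb : b ∈ s) (hc : c ∈ s) :
    IsTurn (g a) (g b) (g c) ↔ IsTurn a b c := by
  simp only [IsTurn, hg.lt_iff_gt ha hb, hg.lt_iff_gt hc hb, hg.lt_iff_gt hb ha,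
    hg.lt_iff_gt hb hc]
  tauto

abbrev IsTurnAt (e : ℕ → ℕ) (i : ℕ) : Prop := IsTurn (e (i - 1)) (e i) (e (i + 1))

def turnCount (e : ℕ → ℕ) (a b : ℕ) : ℕ := #{i ∈ Icc a b | IsTurnAt e i}

def entry {m n : ℕ} (f : Fin m → Fin n) (i : ℕ) : ℕ :=
  if h : 1 ≤ i ∧ i ≤ m then (f ⟨i - 1, by omega⟩ : ℕ) + 1 else 0

section Entry

variable {k m n : ℕ}

theorem entry_of_mem {f : Fin m → Fin n} {i : ℕ} (h₁ : 1 ≤ i) (h₂ : i ≤ m) :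
    entry f i = (f ⟨i - 1, by omega⟩ : ℕ) + 1 := dif_pos ⟨h₁, h₂⟩

theorem entry_zero (f : Fin m → Fin n) : entry f 0 = 0 := dif_neg (by omega)

theorem entry_le (f : Fin m → Fin n) (i : ℕ) : entry f i ≤ n := by
  unfold entry; split_ifs <;> omega

theorem entry_comp (f : Fin m → Fin n) (g : Fin k → Fin m) :
    entry (f ∘ g) = entry f ∘ entry g := by
  ext i
  by_cases hi : 1 ≤ i ∧ i ≤ k
  · have := (g ⟨i - 1, by omega⟩).isLt
    rw [comp_apply, entry_of_mem hi.1 hi.2, entry_of_mem hi.1 hi.2,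
      entry_of_mem (by omega) (by omega)]
    rfl
  · simp only [comp_apply, entry, dif_neg hi]
    rfl

theorem StrictMono.strictMonoOn_entry {f : Fin m → Fin n} (hf : StrictMono f) :
    StrictMonoOn (entry f) (Set.Iic m) := by
  intro i hi j hj hij
  simp only [Set.mem_Iic] at hi hj
  rcases Nat.eq_zero_or_pos i with rfl | hi₀
  · rw [entry_zero, entry_of_mem (by omega) hj]; omega
  · rw [entry_of_mem hi₀ hi, entry_of_mem (by omega) hj, add_lt_add_iff_right, Fin.val_fin_lt]
    exact hf (Fin.mk_lt_mk.mpr (by omega))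

theorem Function.Injective.injOn_entry {f : Fin m → Fin n} (hf : Injective f) :
    Set.InjOn (entry f) (Set.Iic m) := by
  intro i hi j hj hij
  simp only [Set.mem_Iic] at hi hj
  unfold entry at hij
  split_ifs at hij with h₁ h₂ h₂
  · have := hf (Fin.ext (Nat.succ_injective hij))
    simp only [Fin.mk.injEq] at this
    omega
  all_goals omega

theorem StrictMono.strictAntiOn_sub_entry {f : Fin m → Fin n} (hf : StrictMono f) :
    StrictAntiOn (fun v => n + 1 - entry f v) (Set.Iic m) := fun i hi j hj hij => by
  have := hf.strictMonoOn_entry hi hj hij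
  have := entry_le f j
  dsimp only
  omega

theorem eq_of_entry_eq {f f' : Fin m → Fin n}
    (h : ∀ i, 1 ≤ i → i ≤ m → entry f i = entry f' i) : f = f' := by
  funext a
  have := h (a + 1) (by omega) (by omega)
  rw [entry_of_mem (by omega) (by omega), entry_of_mem (by omega) (by omega)] at this
  exact Fin.ext (by simpa using this)

theorem entry_ne_of_disjoint {f : Fin m → Fin n} {g : Fin k → Fin n}
    (hfg : Disjoint (Set.range f) (Set.range g)) (i : ℕ) {j : ℕ} (hj₁ : 1 ≤ j)
    (hj₂ : j ≤ k) :
    entry f i ≠ entry g j := by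
  rw [entry_of_mem (f := g) hj₁ hj₂]
  unfold entry
  split_ifs
  · intro h
    exact Set.disjoint_left.mp hfg (Set.mem_range_self _)
      (by rw [Fin.ext (Nat.succ_injective h)]; exact Set.mem_range_self _)
  · omega

end Entry

section TurnCount

variable {e e' : ℕ → ℕ} {a b : ℕ}

theorem turnCount_eq_of_reflect {c : ℕ} (hb : b < c)
    (h : ∀ i ∈ Icc a b, IsTurnAt e i ↔ IsTurnAt e' (c - i)) :
    turnCount e a b = turnCount e' (c - b) (c - a) := by
  refine card_bij' (fun i _ => c - i) (fun j _ => c - j) ?_ ?_ ?_ ?_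
  · intro i hi
    rw [mem_filter] at hi ⊢
    exact ⟨mem_Icc.mpr (by simp only [mem_Icc] at hi; omega), (h i hi.1).mp hi.2⟩
  · intro j hj
    rw [mem_filter, mem_Icc] at hj
    rw [mem_filter, mem_Icc]
    have hj' := h (c - j) (mem_Icc.mpr (by omega))
    rw [Nat.sub_sub_self (by omega)] at hj'
    exact ⟨by omega, hj'.mpr hj.2⟩
  all_goals intro i hi; simp only [mem_filter, mem_Icc] at hi; omega

theorem turnCount_eq_of_shift {d : ℕ} (hd : d < a)
    (h : ∀ i ∈ Icc a b, IsTurnAt e i ↔ IsTurnAt e' (i - d)) :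
    turnCount e a b = turnCount e' (a - d) (b - d) := by
  refine card_bij' (fun i _ => i - d) (fun j _ => j + d) ?_ ?_ ?_ ?_
  · intro i hi
    rw [mem_filter] at hi ⊢
    exact ⟨mem_Icc.mpr (by simp only [mem_Icc] at hi; omega), (h i hi.1).mp hi.2⟩
  · intro j hj
    rw [mem_filter, mem_Icc] at hj
    rw [mem_filter, mem_Icc]
    have hj' := h (j + d) (mem_Icc.mpr (by omega))
    rw [Nat.add_sub_cancel] at hj'
    exact ⟨by omega, hj'.mpr hj.2⟩
  all_goals intro i hi; simp only [mem_filter, mem_Icc] at hi; omega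

theorem turnCount_eq_add {m : ℕ} (ha : a ≤ m + 1) (hb : m ≤ b) :
    turnCount e a b = turnCount e a m + turnCount e (m + 1) b := by
  have hsplit : Icc a b = Icc a m ∪ Icc (m + 1) b := by
    ext i; simp only [mem_Icc, mem_union]; omega
  rw [turnCount, hsplit, filter_union, card_union_of_disjoint]
  · rfl
  · exact disjoint_filter_filter (disjoint_left.mpr fun i hi hi' => by
      simp only [mem_Icc] at hi hi'; omega)

theorem turnCount_of_lt (h : b < a) : turnCount e a b = 0 := by
  simp [turnCount, Icc_eq_empty_of_lt h]

theorem turnCount_self (h : IsTurnAt e a) : turnCount e a a = 1 := by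
  simp [turnCount, Icc_self, filter_singleton, h]

end TurnCount

section Glue

variable {k n : ℕ}

-- Position `k` carries the maximum `n`; to its left `f` is laid out backwards, to its right `g`
-- forwards, both complemented (`v ↦ n - 1 - v`).
def glue (f : Fin k → Fin n) (g : Fin (n - k) → Fin n) (q : Fin (n + 1)) : Fin (n + 1) :=
  ⟨n - if (q : ℕ) ≤ k then entry f (k - q) else entry g (q - k), by omega⟩

variable {f f' : Fin k → Fin n} {g g' : Fin (n - k) → Fin n}

theorem val_glue (q : Fin (n + 1)) :
    (glue f g q : ℕ) = n - if (q : ℕ) ≤ k then entry f (k - q) else entry g (q - k) := rfl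

theorem glue_apply_self (hk : k ≤ n) : glue f g ⟨k, by omega⟩ = Fin.last n := by
  ext; simp [val_glue, entry_zero]

theorem entry_glue_of_le {i : ℕ} (hi : 1 ≤ i) (hik : i ≤ k + 1) (hk : k ≤ n) :
    entry (glue f g) i = n + 1 - entry f (k + 1 - i) := by
  have := entry_le f (k + 1 - i)
  rw [entry_of_mem hi (by omega), val_glue, if_pos (by simp; omega),
    show k - (i - 1) = k + 1 - i by omega]
  omega

theorem entry_glue_of_ge {i : ℕ} (hki : k + 1 ≤ i) (hin : i ≤ n + 1) :
    entry (glue f g) i = n + 1 - entry g (i - (k + 1)) := by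
  have := entry_le g (i - (k + 1))
  rcases hki.eq_or_lt with rfl | hki
  · rw [entry_of_mem (by omega) hin, val_glue, if_pos (by simp)]
    simp [entry_zero]
  · rw [entry_of_mem (by omega) hin, val_glue, if_neg (by simp; omega),
      show i - 1 - k = i - (k + 1) by omega]
    omega

theorem glue_injective (hf : Injective f) (hg : Injective g)
    (hfg : Disjoint (Set.range f) (Set.range g)) : Injective (glue f g) := by
  intro q q' h
  have hq := q.isLt
  have hq' := q'.isLt
  replace h := congrArg Fin.val h
  simp only [val_glue] at h
  have := entry_le f (k - q)
  have := entry_le f (k - q')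
  have := entry_le g (q - k)
  have := entry_le g (q' - k)
  split_ifs at h with h₁ h₂ h₂
  · have := hf.injOn_entry (by simp) (by simp) (by omega : entry f (k - q) = entry f (k - q'))
    exact Fin.ext (by omega)
  · have := entry_ne_of_disjoint hfg (k - q) (j := q' - k) (by omega) (by omega)
    omega
  · have := entry_ne_of_disjoint hfg (k - q') (j := q - k) (by omega) (by omega)
    omega
  · have := hg.injOn_entry (by simp; omega) (by simp; omega)
      (by omega : entry g (q - k) = entry g (q' - k))
    exact Fin.ext (by omega)

theorem eq_of_glue_eq (hk : k ≤ n) (h : glue f g = glue f' g') : f = f' ∧ g = g' := by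
  have he := congrArg entry h
  refine ⟨eq_of_entry_eq fun j hj₁ hj₂ => ?_, eq_of_entry_eq fun j hj₁ hj₂ => ?_⟩
  · have := congrFun he (k + 1 - j)
    rw [entry_glue_of_le (by omega) (by omega) hk, entry_glue_of_le (by omega) (by omega) hk,
      Nat.sub_sub_self (by omega)] at this
    have := entry_le f j
    have := entry_le f' j
    omega
  · have := congrFun he (j + (k + 1))
    rw [entry_glue_of_ge (by omega) (by omega), entry_glue_of_ge (by omega) (by omega),
      Nat.add_sub_cancel] at this
    have := entry_le g j
    have := entry_le g' j
    omega

end Glue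

section RunCount

variable {k n : ℕ}

theorem isTurnAt_glue_comp_left {e : Fin k → Fin n} (he : StrictMono e) (τ : Fin k → Fin k)
    (g : Fin (n - k) → Fin n) (hk : k ≤ n) {i : ℕ} (hi : 2 ≤ i) (hik : i ≤ k) :
    IsTurnAt (entry (glue (e ∘ τ) g)) i ↔ IsTurnAt (entry τ) (k + 1 - i) := by
  have hentry : ∀ j, 1 ≤ j → j ≤ k + 1 →
      entry (glue (e ∘ τ) g) j = n + 1 - entry e (entry τ (k + 1 - j)) := by
    intro j hj₁ hj₂
    rw [entry_glue_of_le hj₁ hj₂ hk, entry_comp, comp_apply]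
  rw [IsTurnAt, hentry (i - 1) (by omega) (by omega), hentry i (by omega) (by omega),
    hentry (i + 1) (by omega) (by omega),
    he.strictAntiOn_sub_entry.isTurn_iff (entry_le τ _) (entry_le τ _) (entry_le τ _),
    isTurn_comm, show k + 1 - (i - 1) = k + 1 - i + 1 by omega,
    show k + 1 - (i + 1) = k + 1 - i - 1 by omega]

theorem isTurnAt_glue_comp_right {e : Fin (n - k) → Fin n} (he : StrictMono e)
    (f : Fin k → Fin n) (ρ : Fin (n - k) → Fin (n - k)) {i : ℕ} (hi : k + 2 ≤ i)
    (hin : i ≤ n) :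
    IsTurnAt (entry (glue f (e ∘ ρ))) i ↔ IsTurnAt (entry ρ) (i - (k + 1)) := by
  have hentry : ∀ j, k + 1 ≤ j → j ≤ n + 1 →
      entry (glue f (e ∘ ρ)) j = n + 1 - entry e (entry ρ (j - (k + 1))) := by
    intro j hj₁ hj₂
    rw [entry_glue_of_ge hj₁ hj₂, entry_comp, comp_apply]
  rw [IsTurnAt, hentry (i - 1) (by omega) (by omega), hentry i (by omega) (by omega),
    hentry (i + 1) (by omega) (by omega),
    he.strictAntiOn_sub_entry.isTurn_iff (entry_le ρ _) (entry_le ρ _) (entry_le ρ _),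
    show i - 1 - (k + 1) = i - (k + 1) - 1 by omega,
    show i + 1 - (k + 1) = i - (k + 1) + 1 by omega]

theorem isTurnAt_glue_self (f : Fin k → Fin n) (g : Fin (n - k) → Fin n) (hk₁ : 1 ≤ k)
    (hkn : k < n) : IsTurnAt (entry (glue f g)) (k + 1) := by
  have hf₁ := entry_of_mem (f := f) le_rfl hk₁
  have hg₁ := entry_of_mem (f := g) le_rfl (by omega)
  have h₀ : entry (glue f g) k = n + 1 - entry f 1 := by
    rw [entry_glue_of_le hk₁ (by omega) hkn.le, show k + 1 - k = 1 by omega]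
  have h₁ : entry (glue f g) (k + 1) = n + 1 := by
    rw [entry_glue_of_le (by omega) le_rfl hkn.le, Nat.sub_self, entry_zero, Nat.sub_zero]
  have h₂ : entry (glue f g) (k + 1 + 1) = n + 1 - entry g 1 := by
    rw [entry_glue_of_ge (by omega) (by omega), show k + 1 + 1 - (k + 1) = 1 by omega]
  left
  rw [Nat.add_sub_cancel, h₀, h₁, h₂]
  omega

theorem udRunCount_eq (σ : Perm (Fin n)) :
    udRunCount n σ = min n 1 + turnCount (entry σ) 1 (n - 1) := by
  rcases n with _ | n
  · rw [turnCount_of_lt (by omega)]; rfl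
  · rw [show min (n + 1) 1 = 1 by omega]
    exact if_neg n.succ_ne_zero

theorem altRunCount_succ (σ : Perm (Fin (n + 1))) :
    altRunCount (n + 1) σ = 1 + turnCount (entry σ) 2 n := rfl

theorem altRunCount_eq_udRunCount_add {e : Fin k → Fin n} {e' : Fin (n - k) → Fin n}
    (he : StrictMono e) (he' : StrictMono e') (τ : Perm (Fin k)) (ρ : Perm (Fin (n - k)))
    {π : Perm (Fin (n + 1))} (hπ : ⇑π = glue (e ∘ τ) (e' ∘ ρ)) (hn : 1 ≤ n)
    (hk : k ≤ n) :
    altRunCount (n + 1) π = udRunCount k τ + udRunCount (n - k) ρ := by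
  have hL : turnCount (entry π) 2 k = turnCount (entry τ) 1 (k - 1) := by
    have := turnCount_eq_of_reflect (a := 2) (b := k) (c := k + 1) (lt_add_one k)
      fun i hi => hπ ▸ isTurnAt_glue_comp_left he τ _ hk (mem_Icc.mp hi).1 (mem_Icc.mp hi).2
    rwa [show k + 1 - k = 1 by omega, show k + 1 - 2 = k - 1 by omega] at this
  have hR : turnCount (entry π) (k + 2) n = turnCount (entry ρ) 1 (n - k - 1) := by
    have := turnCount_eq_of_shift (a := k + 2) (b := n) (d := k + 1) (lt_add_one _)
      fun i hi => hπ ▸ isTurnAt_glue_comp_right he' _ ρ (mem_Icc.mp hi).1 (mem_Icc.mp hi).2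
    rwa [show k + 2 - (k + 1) = 1 by omega, show n - (k + 1) = n - k - 1 by omega] at this
  have hsplit : turnCount (entry π) 2 n = turnCount (entry π) 2 k +
      (if 1 ≤ k ∧ k < n then 1 else 0) + turnCount (entry π) (k + 2) n := by
    split_ifs with hmid
    · rw [turnCount_eq_add (m := k) (by omega) (by omega),
        turnCount_eq_add (a := k + 1) (m := k + 1) (by omega) (by omega),
        turnCount_self (hπ ▸ isTurnAt_glue_self _ _ hmid.1 hmid.2), ← add_assoc]
    · rcases Nat.eq_zero_or_pos k with rfl | hk₁
      · rw [turnCount_of_lt (a := 2) (b := 0) (by omega)]; simp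
      · rw [show k = n by omega, turnCount_of_lt (a := n + 2) (by omega)]; simp
  rw [altRunCount_succ, udRunCount_eq, udRunCount_eq, hsplit, hL, hR]
  split_ifs <;> omega

end RunCount

theorem eq_of_orderEmbOfFin_comp_eq {α : Type*} [LinearOrder α] {k : ℕ} {s s' : Finset α}
    {hs : #s = k} {hs' : #s' = k} {τ τ' : Perm (Fin k)}
    (h : s.orderEmbOfFin hs ∘ τ = s'.orderEmbOfFin hs' ∘ τ') : s = s' ∧ τ = τ' := by
  obtain rfl : s = s' := by
    simpa [EquivLike.range_comp, range_orderEmbOfFin] using congrArg Set.range h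
  exact ⟨rfl, Equiv.ext fun x => (s.orderEmbOfFin hs).injective (congrFun h x)⟩

section GluePerm

variable {n : ℕ}

abbrev GlueData (n : ℕ) : Type :=
  Σ k : Fin (n + 1), {s : Finset (Fin n) // #s = k} × Perm (Fin k) × Perm (Fin (n - k))

theorem card_compl_eq {k : ℕ} {s : Finset (Fin n)} (hs : #s = k) : #sᶜ = n - k := by
  rw [card_compl, hs, Fintype.card_fin]

theorem glue_orderEmbOfFin_injective {k : ℕ} (s : Finset (Fin n)) (hs : #s = k)
    (τ : Perm (Fin k)) (ρ : Perm (Fin (n - k))) :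
    Injective
      (glue (s.orderEmbOfFin hs ∘ τ) (sᶜ.orderEmbOfFin (card_compl_eq hs) ∘ ρ)) := by
  refine glue_injective ((s.orderEmbOfFin hs).injective.comp τ.injective)
    ((sᶜ.orderEmbOfFin _).injective.comp ρ.injective) ?_
  rw [EquivLike.range_comp, EquivLike.range_comp, range_orderEmbOfFin, range_orderEmbOfFin,
    coe_compl]
  exact disjoint_compl_right

noncomputable def gluePerm : GlueData n → Perm (Fin (n + 1))
  | ⟨_, s, τ, ρ⟩ => Equiv.ofBijective _
      (Finite.injective_iff_bijective.mp (glue_orderEmbOfFin_injective s.1 s.2 τ ρ))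

theorem card_glueData : Fintype.card (GlueData n) = (n + 1).factorial := by
  simp only [Fintype.card_sigma, Fintype.card_prod, Fintype.card_finset_len, Fintype.card_perm,
    Fintype.card_fin]
  rw [Fin.sum_univ_eq_sum_range (fun k => n.choose k * (k.factorial * (n - k).factorial)),
    sum_congr rfl fun k hk => by
      rw [← mul_assoc,
        Nat.choose_mul_factorial_mul_factorial (Nat.lt_succ_iff.mp (mem_range.mp hk))],
    sum_const, card_range, smul_eq_mul, Nat.factorial_succ]

theorem gluePerm_apply_fst (d : GlueData n) : gluePerm d d.1 = Fin.last n :=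
  glue_apply_self (Nat.lt_succ_iff.mp d.1.isLt)

theorem gluePerm_injective : Injective (gluePerm (n := n)) := by
  rintro ⟨k, s, τ, ρ⟩ ⟨k', s', τ', ρ'⟩ h
  obtain rfl : k = k' := (gluePerm _).injective <| by
    rw [gluePerm_apply_fst ⟨k, s, τ, ρ⟩, h, gluePerm_apply_fst ⟨k', s', τ', ρ'⟩]
  obtain ⟨hτ, hρ⟩ := eq_of_glue_eq (Nat.lt_succ_iff.mp k.isLt) (congrArg DFunLike.coe h)
  obtain ⟨hs, rfl⟩ := eq_of_orderEmbOfFin_comp_eq hτ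
  obtain rfl : s = s' := Subtype.ext hs
  obtain ⟨-, rfl⟩ := eq_of_orderEmbOfFin_comp_eq hρ
  rfl

theorem gluePerm_bijective : Bijective (gluePerm (n := n)) :=
  (Fintype.bijective_iff_injective_and_card _).mpr
    ⟨gluePerm_injective, by rw [card_glueData, Fintype.card_perm, Fintype.card_fin]⟩

theorem altRunCount_gluePerm (hn : 1 ≤ n) (d : GlueData n) :
    altRunCount (n + 1) (gluePerm d) = udRunCount d.1 d.2.2.1 + udRunCount (n - d.1) d.2.2.2 :=
  altRunCount_eq_udRunCount_add (OrderEmbedding.strictMono _) (OrderEmbedding.strictMono _) _ _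
    rfl hn (Nat.lt_succ_iff.mp d.1.isLt)

end GluePerm

theorem sum_card_fiber_mul_X_pow {ι R : Type*} [Fintype ι] [CommSemiring R] (g : ι → ℕ)
    {t : Finset ℕ} (h : ∀ i, g i ∈ t) :
    ∑ k ∈ t, (#{i | g i = k} : R[X]) * X ^ k = ∑ i, X ^ g i := by
  rw [← sum_fiberwise_of_maps_to (fun i _ => h i)]
  refine sum_congr rfl fun k _ => ?_
  rw [sum_congr rfl fun i hi => by rw [(mem_filter.mp hi).2], sum_const, nsmul_eq_mul]

theorem turnCount_le (e : ℕ → ℕ) (a b : ℕ) : turnCount e a b ≤ b + 1 - a :=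
  (card_filter_le _ _).trans (Nat.card_Icc a b).le

theorem UDpoly_eq_sum (n : ℕ) : UDpoly n = ∑ σ : Perm (Fin n), X ^ udRunCount n σ :=
  sum_card_fiber_mul_X_pow _ fun σ => by
    have := turnCount_le (entry σ) 1 (n - 1)
    rw [mem_range, udRunCount_eq]
    omega

theorem Rpoly_eq_sum {n : ℕ} (hn : 1 ≤ n) :
    Rpoly n = ∑ π : Perm (Fin (n + 1)), X ^ altRunCount (n + 1) π := by
  rw [Rpoly, if_neg (by omega)]
  exact sum_card_fiber_mul_X_pow _ fun π => by
    have := turnCount_le (entry π) 2 n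
    rw [mem_Icc, altRunCount_succ]
    omega

theorem sum_X_pow_udRunCount_add (n k : ℕ) :
    ∑ x : {s : Finset (Fin n) // #s = k} × Perm (Fin k) × Perm (Fin (n - k)),
      (X : ℚ[X]) ^ (udRunCount k x.2.1 + udRunCount (n - k) x.2.2)
      = n.choose k * UDpoly k * UDpoly (n - k) := by
  simp only [Fintype.sum_prod_type, pow_add, sum_const, card_univ, Fintype.card_finset_len,
    Fintype.card_fin, nsmul_eq_mul, ← sum_mul_sum, UDpoly_eq_sum, mul_assoc]

theorem Rpoly_eq_sum_choose_mul (n : ℕ) :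
    Rpoly n = ∑ k ∈ range (n + 1), (n.choose k : ℚ[X]) * UDpoly k * UDpoly (n - k) := by
  rcases Nat.eq_zero_or_pos n with rfl | hn
  · simp [Rpoly, UDpoly_eq_sum, udRunCount]
  rw [Rpoly_eq_sum hn, ← Fintype.sum_bijective _ gluePerm_bijective _ _
      fun d => congrArg (X ^ ·) (altRunCount_gluePerm hn d).symm, Fintype.sum_sigma,
    ← Fin.sum_univ_eq_sum_range]
  exact sum_congr rfl fun k _ => sum_X_pow_udRunCount_add n k

theorem PowerSeries.mk_inv_factorial_smul_mul {A : Type*} [CommRing A] [Algebra ℚ A]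
    (a b : ℕ → A) :
    (PowerSeries.mk fun n => ((n.factorial : ℚ))⁻¹ • a n) *
        PowerSeries.mk (fun n => ((n.factorial : ℚ))⁻¹ • b n) =
      PowerSeries.mk fun n => ((n.factorial : ℚ))⁻¹ •
        ∑ k ∈ range (n + 1), (n.choose k : A) * a k * b (n - k) := by
  ext n
  rw [PowerSeries.coeff_mul, Nat.sum_antidiagonal_eq_sum_range_succ_mk, PowerSeries.coeff_mk,
    smul_sum]
  refine sum_congr rfl fun k hk => ?_
  have hkn := Nat.lt_succ_iff.mp (mem_range.mp hk)
  rw [PowerSeries.coeff_mk, PowerSeries.coeff_mk, smul_mul_smul_comm, mul_assoc,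
    ← nsmul_eq_mul, ← Nat.cast_smul_eq_nsmul ℚ, smul_smul]
  congr 1
  have : (n.choose k : ℚ) ≠ 0 := by exact_mod_cast (Nat.choose_pos hkn).ne'
  rw [← Nat.choose_mul_factorial_mul_factorial hkn]
  push_cast
  field_simp

/-- `R_n(x) = Σ_{k=0}^{n} C(n,k)·Λ_k(x)·Λ_{n−k}(x)`; equivalently the EGF of
the `R_n` is the square of the EGF of the `Λ_n`. -/
theorem stmt_14 :
    (∀ n : ℕ, Rpoly n = ∑ k ∈ Finset.range (n + 1),
        (n.choose k : Polynomial ℚ) * UDpoly k * UDpoly (n - k)) ∧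
      (PowerSeries.mk fun n => ((n.factorial : ℚ))⁻¹ • Rpoly n)
        = (PowerSeries.mk fun n => ((n.factorial : ℚ))⁻¹ • UDpoly n) ^ 2 := by
  refine ⟨Rpoly_eq_sum_choose_mul, ?_⟩
  rw [sq, PowerSeries.mk_inv_factorial_smul_mul]
  simp only [Rpoly_eq_sum_choose_mul]
end

section
/- For every n ≥ 1, the following polynomial identity holds in ℚ[x]: 2^{n−1}·Λ_n(x) = x·Σ_{k=0}^{⌊(n−1)/2⌋} M(n,k)·(2x)^k·(1+x)^{n−1−k}. (This is the denominator-free form of the relation Λ_n(x) = x·(1+x)^{n−1}/2^{n−1} · M_n(2x/(1+x)).) -/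
open Finset Polynomial

def IsPeak (e : ℕ → ℕ) (i : ℕ) : Prop := e (i - 1) < e i ∧ e (i + 1) < e i

def IsValley (e : ℕ → ℕ) (i : ℕ) : Prop := e i < e (i - 1) ∧ e i < e (i + 1)

instance (e : ℕ → ℕ) : DecidablePred (IsPeak e) := fun _ => instDecidableAnd

instance (e : ℕ → ℕ) : DecidablePred (IsValley e) := fun _ => instDecidableAnd

section Peaks

variable {e : ℕ → ℕ}

lemma IsPeak.not_succ {i : ℕ} (h : IsPeak e i) : ¬ IsPeak e (i + 1) := fun h' =>
  lt_asymm h.2 (by simpa only [IsPeak, Nat.add_sub_cancel] using h'.1)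

lemma not_isPeak_succ_of_mem_filter {s : Finset ℕ} :
    ∀ i ∈ {i ∈ s | IsPeak e i}, i + 1 ∉ {i ∈ s | IsPeak e i} := fun _ hi hi' =>
  (mem_filter.1 hi).2.not_succ (mem_filter.1 hi').2

/-- Peaks and valleys alternate along a sequence starting with an ascent. -/
lemma card_peaks_add_ascent (h01 : e 0 < e 1) :
    ∀ j, (∀ i ∈ Icc 1 j, e i ≠ e (i + 1)) →
      #{i ∈ Icc 1 j | IsPeak e i} + (if e j < e (j + 1) then 1 else 0)
        = #{i ∈ Icc 1 j | IsValley e i} + 1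
  | 0, _ => by simp [h01]
  | j + 1, hne => by
    have ih := card_peaks_add_ascent h01 j fun i hi => hne i (by simp at hi ⊢; omega)
    have hj : e (j + 1) ≠ e (j + 1 + 1) := hne (j + 1) (by simp)
    have hj' : e j ≠ e (j + 1) := by
      rcases j with _ | j
      · exact h01.ne
      · exact hne (j + 1) (by simp)
    simp only [card_filter, sum_Icc_succ_top (show 1 ≤ j + 1 by omega)] at ih ⊢
    simp only [IsPeak, IsValley, Nat.add_sub_cancel] at ih ⊢
    split_ifs at ih ⊢ <;> omega

end Peaks

section Separated

variable {S : Finset ℕ} {a b : ℕ}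

lemma card_filter_eq_or_succ_eq (hS : ∀ i ∈ S, i + 1 ∉ S) (p : ℕ) :
    #{i ∈ S | i = p ∨ i = p + 1} = if p ∈ S ∨ p + 1 ∈ S then 1 else 0 := by
  rw [filter_or, filter_eq', filter_eq']
  by_cases hp : p ∈ S <;> by_cases hp' : p + 1 ∈ S <;> simp [hp, hp']
  exact hS p hp hp'

lemma card_filter_adjacent (hS : S ⊆ Ioo a b) (hsep : ∀ i ∈ S, i + 1 ∉ S) :
    #{p ∈ Ico a b | p ∈ S ∨ p + 1 ∈ S} = 2 * #S := by
  have hpos : ∀ i ∈ S, a < i ∧ i < b := fun i hi => mem_Ioo.1 (hS hi)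
  have hset : {p ∈ Ico a b | p ∈ S ∨ p + 1 ∈ S} = S ∪ S.image (· - 1) := by
    ext p
    simp only [mem_filter, mem_Ico, mem_union, mem_image]
    constructor
    · rintro ⟨-, hp | hp⟩
      · exact Or.inl hp
      · exact Or.inr ⟨p + 1, hp, rfl⟩
    · rintro (hp | ⟨i, hi, rfl⟩)
      · have := hpos p hp; exact ⟨⟨by omega, by omega⟩, Or.inl hp⟩
      · have := hpos i hi
        exact ⟨⟨by omega, by omega⟩, Or.inr (by rwa [Nat.sub_add_cancel (by omega)])⟩
  have hdisj : Disjoint S (S.image (· - 1)) := by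
    simp only [disjoint_left, mem_image]
    rintro _ hp ⟨i, hi, rfl⟩
    exact hsep _ hp (by rwa [Nat.sub_add_cancel (by have := hpos i hi; omega)])
  have hinj : Set.InjOn (· - 1) (S : Set ℕ) := fun i hi j hj hij => by
    have := hpos i hi; have := hpos j hj; simp only at hij; omega
  rw [hset, card_union_of_disjoint hdisj, card_image_of_injOn hinj, two_mul]

lemma two_mul_card_le (hS : S ⊆ Ioo a b) (hsep : ∀ i ∈ S, i + 1 ∉ S) : 2 * #S ≤ b - a := by
  rw [← card_filter_adjacent hS hsep, ← Nat.card_Ico]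
  exact card_filter_le _ _

lemma sum_Ico_ite_adjacent {M : Type*} [AddCommMonoid M] (hS : S ⊆ Ioo a b)
    (hsep : ∀ i ∈ S, i + 1 ∉ S) (x y : M) :
    ∑ p ∈ Ico a b, (if p ∈ S ∨ p + 1 ∈ S then x else y) = (2 * #S) • x + (b - a - 2 * #S) • y := by
  have hcard := card_filter_add_card_filter_not (s := Ico a b) (fun p => p ∈ S ∨ p + 1 ∈ S)
  rw [card_filter_adjacent hS hsep, Nat.card_Ico] at hcard
  rw [sum_ite, sum_const, sum_const, card_filter_adjacent hS hsep]
  congr 2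
  omega

end Separated

section Insertion

variable {e : ℕ → ℕ} {v : ℕ}

def seqInsert (e : ℕ → ℕ) (p v : ℕ) (i : ℕ) : ℕ :=
  if i ≤ p then e i else if i = p + 1 then v else e (i - 1)

lemma isPeak_seqInsert_iff (hv : ∀ i, e i < v) {p i : ℕ} :
    IsPeak (seqInsert e p v) i ↔
      i = p + 1 ∨ (i < p ∧ IsPeak e i) ∨ (p + 2 < i ∧ IsPeak e (i - 1)) := by
  rcases lt_or_ge (p + 2) i with hi | hi
  · obtain ⟨j, rfl⟩ : ∃ j, i = j + 1 := ⟨i - 1, by omega⟩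
    simp only [IsPeak, seqInsert, Nat.add_sub_cancel]
    split_ifs <;> omega
  · have := hv p; have := hv (p + 1); have := hv (i - 1); have := hv i
    simp only [IsPeak, seqInsert]
    split_ifs <;> first | omega | simp_all

lemma filter_isPeak_seqInsert (hv : ∀ i, e i < v) {lo hi p : ℕ} (hlo : lo ≤ 2)
    (hp : p ≤ hi + 1) :
    {i ∈ Icc lo (hi + 1) | IsPeak (seqInsert e p v) i}
      = {i ∈ Icc lo (hi + 1) | i = p + 1} ∪
          {i ∈ {i ∈ Icc lo hi | IsPeak e i} | ¬(i = p ∨ i = p + 1)}.image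
            fun j => if j ≤ p then j else j + 1 := by
  ext i
  simp only [mem_filter, mem_union, mem_image, mem_Icc, isPeak_seqInsert_iff hv]
  constructor
  · rintro ⟨hI, rfl | ⟨hip, hpk⟩ | ⟨hip, hpk⟩⟩
    · exact Or.inl ⟨hI, rfl⟩
    · exact Or.inr ⟨i, ⟨⟨⟨hI.1, by omega⟩, hpk⟩, by omega⟩, if_pos hip.le⟩
    · refine Or.inr ⟨i - 1, ⟨⟨⟨by omega, by omega⟩, hpk⟩, by omega⟩, ?_⟩
      rw [if_neg (by omega)]; omega
  · rintro (⟨hI, rfl⟩ | ⟨j, ⟨⟨hj, hpk⟩, hjp⟩, rfl⟩)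
    · exact ⟨hI, Or.inl rfl⟩
    · split_ifs
      · exact ⟨⟨hj.1, by omega⟩, Or.inr (Or.inl ⟨by omega, hpk⟩)⟩
      · exact ⟨⟨by omega, by omega⟩, Or.inr (Or.inr ⟨by omega, by simpa using hpk⟩)⟩

/- The hypotheses on `lo` and `p` ensure that an entry pushed into the window `[lo, hi + 1]`
from outside sits next to `v`, so it is not a peak. -/
lemma card_peaks_seqInsert (hv : ∀ i, e i < v) {lo hi p : ℕ} (hlo : lo ≤ 2) (hp : p ≤ hi + 1) :
    #{i ∈ Icc lo (hi + 1) | IsPeak (seqInsert e p v) i}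
      = #{i ∈ Icc lo hi | IsPeak e i} +
          if (lo ≤ p + 1 ∧ p + 1 ≤ hi + 1) ∧
              ¬(p ∈ {i ∈ Icc lo hi | IsPeak e i} ∨ p + 1 ∈ {i ∈ Icc lo hi | IsPeak e i})
            then 1 else 0 := by
  set P := {i ∈ Icc lo hi | IsPeak e i}
  have hdisj : Disjoint {i ∈ Icc lo (hi + 1) | i = p + 1}
      ({i ∈ P | ¬(i = p ∨ i = p + 1)}.image fun j => if j ≤ p then j else j + 1) := by
    simp only [disjoint_left, mem_filter, mem_image]
    rintro _ ⟨-, rfl⟩ ⟨j, ⟨-, hj⟩, hjp⟩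
    split_ifs at hjp <;> omega
  have hinj : Set.InjOn (fun j => if j ≤ p then j else j + 1)
      ↑({i ∈ P | ¬(i = p ∨ i = p + 1)}) := by
    intro i _ j _ hij
    simp only at hij
    split_ifs at hij <;> omega
  have hsplit := card_filter_add_card_filter_not (s := P) (fun i => i = p ∨ i = p + 1)
  rw [card_filter_eq_or_succ_eq not_isPeak_succ_of_mem_filter p] at hsplit
  have hadj : (p ∈ P ∨ p + 1 ∈ P) → lo ≤ p + 1 ∧ p + 1 ≤ hi + 1 := by
    simp only [P, mem_filter, mem_Icc]; omega
  rw [filter_isPeak_seqInsert hv hlo hp, card_union_of_disjoint hdisj,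
    card_image_of_injOn hinj, filter_eq', ← hsplit]
  simp only [mem_Icc] at hadj ⊢
  split_ifs <;> simp only [card_singleton, card_empty] <;> first | omega | (exfalso; tauto)

end Insertion

lemma sum_card_fiber_mul {α R : Type*} [Fintype α] [Semiring R] (g : α → ℕ) {N : ℕ}
    (hg : ∀ a, g a < N) (h : ℕ → R) :
    ∑ k ∈ range N, (#{a | g a = k} : R) * h k = ∑ a, h (g a) := by
  rw [← sum_fiberwise_of_maps_to (t := range N) (g := g) fun a _ => mem_range.2 (hg a)]
  refine sum_congr rfl fun k _ => ?_
  rw [sum_congr rfl fun a ha => by rw [(mem_filter.1 ha).2], sum_const, nsmul_eq_mul]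

section Permutations

variable {n : ℕ}

lemma permEntry_le (σ : Equiv.Perm (Fin n)) (i : ℕ) : permEntry n σ i ≤ n := by
  unfold permEntry
  split
  · exact (σ _).isLt
  · omega

lemma permEntry_pos (σ : Equiv.Perm (Fin n)) {i : ℕ} (h1 : 1 ≤ i) (h2 : i ≤ n) :
    0 < permEntry n σ i := by
  rw [permEntry, dif_pos ⟨h1, h2⟩]; omega

lemma permEntry_ne (σ : Equiv.Perm (Fin n)) {i j : ℕ} (hi : i ∈ Icc 1 n) (hj : j ∈ Icc 1 n)
    (hij : i ≠ j) : permEntry n σ i ≠ permEntry n σ j := by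
  rw [mem_Icc] at hi hj
  rw [permEntry, permEntry, dif_pos hi, dif_pos hj]
  intro h
  have := congrArg Fin.val (σ.injective (Fin.ext (Nat.succ_injective h)))
  simp only at this
  omega

/-- Insert the new maximum into `τ` at position `p` (0-based). -/
def insMax (τ : Equiv.Perm (Fin n)) (p : Fin (n + 1)) : Equiv.Perm (Fin (n + 1)) :=
  ((finSuccEquiv' p).trans (Equiv.optionCongr τ)).trans finSuccEquivLast.symm

lemma insMax_apply_self (τ : Equiv.Perm (Fin n)) (p : Fin (n + 1)) :
    insMax τ p p = Fin.last n := by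
  simp [insMax, finSuccEquivLast]

lemma insMax_apply_succAbove (τ : Equiv.Perm (Fin n)) (p : Fin (n + 1)) (k : Fin n) :
    insMax τ p (p.succAbove k) = (τ k).castSucc := by
  simp [insMax, finSuccEquivLast]

lemma insMax_injective :
    Function.Injective fun q : Equiv.Perm (Fin n) × Fin (n + 1) => insMax q.1 q.2 := by
  rintro ⟨τ, p⟩ ⟨τ', p'⟩ h
  simp only at h
  obtain rfl : p = p' := by
    by_contra hne
    obtain ⟨k, hk⟩ := Fin.exists_succAbove_eq hne
    have h1 := insMax_apply_self τ p
    rw [h, ← hk, insMax_apply_succAbove] at h1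
    exact (Fin.castSucc_lt_last _).ne h1
  obtain rfl : τ = τ' := Equiv.ext fun k => Fin.castSucc_injective n <| by
    rw [← insMax_apply_succAbove, ← insMax_apply_succAbove, h]
  rfl

noncomputable def insMaxEquiv (n : ℕ) :
    Equiv.Perm (Fin n) × Fin (n + 1) ≃ Equiv.Perm (Fin (n + 1)) :=
  Equiv.ofBijective _ ((Fintype.bijective_iff_injective_and_card _).mpr
    ⟨insMax_injective, by simp [Fintype.card_perm, Nat.factorial_succ, Nat.mul_comm]⟩)

lemma permEntry_insMax (τ : Equiv.Perm (Fin n)) (p : Fin (n + 1)) :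
    permEntry (n + 1) (insMax τ p) = seqInsert (permEntry n τ) p (n + 1) := by
  have hp := p.isLt
  funext i
  unfold seqInsert permEntry
  split_ifs <;> try omega
  · have hk : (⟨i - 1, by omega⟩ : Fin (n + 1)) = p.succAbove ⟨i - 1, by omega⟩ := by
      rw [Fin.succAbove_of_castSucc_lt _ _ (by rw [Fin.lt_def]; simp; omega)]; rfl
    rw [hk, insMax_apply_succAbove]
    rfl
  · rw [show (⟨i - 1, by omega⟩ : Fin (n + 1)) = p from Fin.ext (by simp; omega),
      insMax_apply_self]
    rfl
  · have hk : (⟨i - 1, by omega⟩ : Fin (n + 1)) = p.succAbove ⟨i - 1 - 1, by omega⟩ := by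
      rw [Fin.succAbove_of_le_castSucc _ _ (by rw [Fin.le_def]; simp; omega)]
      ext; simp; omega
    rw [hk, insMax_apply_succAbove]
    rfl

lemma sum_perm_succ {M : Type*} [AddCommMonoid M] (f : Equiv.Perm (Fin (n + 1)) → M) :
    ∑ σ, f σ = ∑ τ : Equiv.Perm (Fin n), ∑ p : Fin (n + 1), f (insMax τ p) := by
  rw [← (insMaxEquiv n).sum_comp, Fintype.sum_prod_type]
  rfl

end Permutations

section Statistics

variable {n : ℕ}

def leftPeaks (n : ℕ) (σ : Equiv.Perm (Fin n)) : Finset ℕ :=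
  {i ∈ Icc 1 (n - 1) | IsPeak (permEntry n σ) i}

def intPeaks (n : ℕ) (σ : Equiv.Perm (Fin n)) : Finset ℕ :=
  {i ∈ Icc 2 (n - 1) | IsPeak (permEntry n σ) i}

lemma card_leftPeaks (σ : Equiv.Perm (Fin n)) : #(leftPeaks n σ) = leftPeakCount n σ := rfl

lemma card_intPeaks (σ : Equiv.Perm (Fin n)) : #(intPeaks n σ) = intPeakCount n σ := rfl

lemma leftPeaks_subset (σ : Equiv.Perm (Fin n)) : leftPeaks n σ ⊆ Ioo 0 n := fun i hi => by
  simp only [leftPeaks, mem_filter, mem_Icc] at hi; simp only [mem_Ioo]; omega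

lemma intPeaks_subset (σ : Equiv.Perm (Fin n)) : intPeaks n σ ⊆ Ioo 1 n := fun i hi => by
  simp only [intPeaks, mem_filter, mem_Icc] at hi; simp only [mem_Ioo]; omega

lemma leftPeaks_subset_of_ascent (σ : Equiv.Perm (Fin n))
    (h : permEntry n σ (n - 1) < permEntry n σ n) : leftPeaks n σ ⊆ Ioo 0 (n - 1) := fun i hi => by
  obtain ⟨hi0, hin⟩ := mem_Ioo.1 (leftPeaks_subset σ hi)
  refine mem_Ioo.2 ⟨hi0, lt_of_le_of_ne (by omega) fun hi1 => ?_⟩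
  have hpk := (mem_filter.1 hi).2.2
  rw [hi1, Nat.sub_add_cancel (by omega)] at hpk
  exact lt_asymm h hpk

lemma udRunCount_eq_s17 (hn : 1 ≤ n) (σ : Equiv.Perm (Fin n)) :
    udRunCount n σ = 2 * leftPeakCount n σ +
      if permEntry n σ (n - 1) < permEntry n σ n then 1 else 0 := by
  have htel := card_peaks_add_ascent (e := permEntry n σ) (permEntry_pos σ le_rfl hn) (n - 1)
    fun i hi => permEntry_ne σ (by simp at hi ⊢; omega) (by simp at hi ⊢; omega) (by omega)
  have hdisj : Disjoint {i ∈ Icc 1 (n - 1) | IsPeak (permEntry n σ) i}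
      {i ∈ Icc 1 (n - 1) | IsValley (permEntry n σ) i} :=
    disjoint_filter.2 fun _ _ hp hv => lt_asymm hp.1 hv.1
  rw [Nat.sub_add_cancel hn] at htel
  rw [udRunCount, if_neg (by omega)]
  change 1 + #{i ∈ Icc 1 (n - 1) | IsPeak (permEntry n σ) i ∨ IsValley (permEntry n σ) i} = _
  rw [filter_or, card_union_of_disjoint hdisj]
  change _ = 2 * #{i ∈ Icc 1 (n - 1) | IsPeak (permEntry n σ) i} + _
  omega

lemma udRunCount_le (σ : Equiv.Perm (Fin n)) : udRunCount n σ ≤ n := by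
  unfold udRunCount
  split_ifs
  · omega
  · have := card_filter_le (Icc 1 (n - 1)) fun i =>
      (permEntry n σ (i - 1) < permEntry n σ i ∧ permEntry n σ (i + 1) < permEntry n σ i) ∨
      (permEntry n σ i < permEntry n σ (i - 1) ∧ permEntry n σ i < permEntry n σ (i + 1))
    simp only [Nat.card_Icc] at this
    omega

lemma two_mul_intPeakCount_le (σ : Equiv.Perm (Fin n)) : 2 * intPeakCount n σ ≤ n - 1 :=
  two_mul_card_le (intPeaks_subset σ) not_isPeak_succ_of_mem_filter

lemma leftPeakCount_insMax (hn : 1 ≤ n) (τ : Equiv.Perm (Fin n)) (p : Fin (n + 1)) :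
    leftPeakCount (n + 1) (insMax τ p) = leftPeakCount n τ +
      if (p : ℕ) < n ∧ ¬((p : ℕ) ∈ leftPeaks n τ ∨ (p : ℕ) + 1 ∈ leftPeaks n τ) then 1 else 0 := by
  have h := card_peaks_seqInsert (fun i => Nat.lt_succ_of_le (permEntry_le τ i)) (lo := 1)
    (hi := n - 1) (p := p) one_le_two (by have := p.isLt; omega)
  rw [Nat.sub_add_cancel hn, ← permEntry_insMax] at h
  simp only [← card_leftPeaks, leftPeaks, Nat.add_sub_cancel, h]
  exact congrArg _ (if_congr (and_congr_left fun _ => by omega) rfl rfl)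

lemma intPeakCount_insMax (hn : 1 ≤ n) (τ : Equiv.Perm (Fin n)) (p : Fin (n + 1)) :
    intPeakCount (n + 1) (insMax τ p) = intPeakCount n τ +
      if (1 ≤ (p : ℕ) ∧ (p : ℕ) < n) ∧ ¬((p : ℕ) ∈ intPeaks n τ ∨ (p : ℕ) + 1 ∈ intPeaks n τ)
        then 1 else 0 := by
  have h := card_peaks_seqInsert (fun i => Nat.lt_succ_of_le (permEntry_le τ i)) (lo := 2)
    (hi := n - 1) (p := p) le_rfl (by have := p.isLt; omega)
  rw [Nat.sub_add_cancel hn, ← permEntry_insMax] at h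
  simp only [← card_intPeaks, intPeaks, Nat.add_sub_cancel, h]
  exact congrArg _ (if_congr (and_congr_left fun _ => by omega) rfl rfl)

lemma udRunCount_insMax (hn : 1 ≤ n) (τ : Equiv.Perm (Fin n)) (p : Fin (n + 1)) :
    udRunCount (n + 1) (insMax τ p) =
      2 * (leftPeakCount n τ +
        if (p : ℕ) < n ∧ ¬((p : ℕ) ∈ leftPeaks n τ ∨ (p : ℕ) + 1 ∈ leftPeaks n τ) then 1 else 0) +
      if (p : ℕ) = n ∨ ((p : ℕ) + 2 ≤ n ∧ permEntry n τ (n - 1) < permEntry n τ n)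
        then 1 else 0 := by
  rw [udRunCount_eq_s17 (by omega), leftPeakCount_insMax hn, Nat.add_sub_cancel, permEntry_insMax]
  have := permEntry_le τ n
  have := p.isLt
  refine congrArg _ (if_congr ?_ rfl rfl)
  simp only [seqInsert, Nat.add_sub_cancel]
  split_ifs <;> omega

end Statistics

section SlotSums

variable {M : Type*} [AddCommMonoid M]

/- A slot next to a left peak keeps the number of up-down runs, and so does the last slot after a
final ascent; one slot (the last, or the one before it after a final ascent) adds one run, and all
other slots add two. -/
lemma sum_insMax_udRunCount {n : ℕ} (hn : 1 ≤ n) (τ : Equiv.Perm (Fin n)) (f : ℕ → M) :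
    ∑ p : Fin (n + 1), f (udRunCount (n + 1) (insMax τ p))
      = udRunCount n τ • f (udRunCount n τ) + f (udRunCount n τ + 1)
        + (n - udRunCount n τ) • f (udRunCount n τ + 2) := by
  simp only [udRunCount_insMax hn τ, udRunCount_eq_s17 hn, ← card_leftPeaks]
  obtain ⟨m, rfl⟩ : ∃ m, n = m + 1 := ⟨n - 1, by omega⟩
  set S := leftPeaks (m + 1) τ
  have hsep : ∀ i ∈ S, i + 1 ∉ S := not_isPeak_succ_of_mem_filter
  simp only [Nat.add_sub_cancel]
  rw [Fin.sum_univ_eq_sum_range (fun p => f (2 * (#S +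
    if p < m + 1 ∧ ¬(p ∈ S ∨ p + 1 ∈ S) then 1 else 0) +
      if p = m + 1 ∨ (p + 2 ≤ m + 1 ∧ permEntry (m + 1) τ m < permEntry (m + 1) τ (m + 1))
        then 1 else 0))]
  by_cases hfa : permEntry (m + 1) τ m < permEntry (m + 1) τ (m + 1)
  · have hS : S ⊆ Ioo 0 m := leftPeaks_subset_of_ascent τ hfa
    have hm : m ∉ S ∧ m + 1 ∉ S := ⟨fun h => by simpa using hS h, fun h => by simpa using hS h⟩
    rw [sum_range_succ, sum_range_succ, range_eq_Ico,
      sum_congr rfl fun p hp => show _ = if p ∈ S ∨ p + 1 ∈ S then f (2 * #S + 1)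
        else f (2 * #S + 1 + 2) by
      rw [mem_Ico] at hp; rw [if_pos (Or.inr ⟨by omega, hfa⟩)]
      by_cases hadj : p ∈ S ∨ p + 1 ∈ S
      · rw [if_pos hadj, if_neg fun h => h.2 hadj, add_zero]
      · rw [if_neg hadj, if_pos ⟨by omega, hadj⟩]; ring_nf,
      sum_Ico_ite_adjacent hS hsep]
    rw [if_pos ⟨m.lt_succ_self, by tauto⟩, if_neg (by omega), if_neg (by omega),
      if_pos (Or.inl rfl), if_pos hfa, show m + 1 - (2 * #S + 1) = m - 0 - 2 * #S by omega, succ_nsmul]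
    ring_nf
    abel
  · rw [sum_range_succ, range_eq_Ico,
      sum_congr rfl fun p hp => show _ = if p ∈ S ∨ p + 1 ∈ S then f (2 * #S)
        else f (2 * #S + 2) by
      rw [mem_Ico] at hp; rw [if_neg (show ¬(p = m + 1 ∨ _) from fun h => h.elim (by omega) fun h => hfa h.2)]
      by_cases hadj : p ∈ S ∨ p + 1 ∈ S
      · rw [if_pos hadj, if_neg fun h => h.2 hadj]; ring_nf
      · rw [if_neg hadj, if_pos ⟨by omega, hadj⟩]; ring_nf,
      sum_Ico_ite_adjacent (leftPeaks_subset τ) hsep]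
    rw [if_neg (by omega), if_pos (Or.inl rfl), if_neg hfa]
    simp only [add_zero, Nat.sub_zero]
    abel

/- The two end slots and the slots next to an interior peak keep the number of interior peaks;
every other slot adds one. -/
lemma sum_insMax_intPeakCount {n : ℕ} (hn : 1 ≤ n) (τ : Equiv.Perm (Fin n)) (f : ℕ → M) :
    ∑ p : Fin (n + 1), f (intPeakCount (n + 1) (insMax τ p))
      = (2 * intPeakCount n τ + 2) • f (intPeakCount n τ)
        + (n - 1 - 2 * intPeakCount n τ) • f (intPeakCount n τ + 1) := by
  simp only [intPeakCount_insMax hn τ, ← card_intPeaks]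
  set S := intPeaks n τ
  have hsep : ∀ i ∈ S, i + 1 ∉ S := not_isPeak_succ_of_mem_filter
  rw [Fin.sum_univ_eq_sum_range (fun p => f (#S +
    if (1 ≤ p ∧ p < n) ∧ ¬(p ∈ S ∨ p + 1 ∈ S) then 1 else 0)), sum_range_succ, range_eq_Ico,
    sum_eq_sum_Ico_succ_bot hn]
  rw [sum_congr rfl fun p hp => show _ = if p ∈ S ∨ p + 1 ∈ S then f #S else f (#S + 1) by
      rw [mem_Ico] at hp
      by_cases hadj : p ∈ S ∨ p + 1 ∈ S
      · rw [if_pos hadj, if_neg fun h => h.2 hadj, add_zero]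
      · rw [if_neg hadj, if_pos ⟨by omega, hadj⟩],
    sum_Ico_ite_adjacent (intPeaks_subset τ) hsep, if_neg (by omega), if_neg (by omega)]
  simp only [add_zero]
  rw [add_nsmul, two_nsmul]
  abel

end SlotSums

lemma mul_derivative_pow {R : Type*} [CommSemiring R] (q : R[X]) (k : ℕ) :
    q * derivative (q ^ k) = k * q ^ k * derivative q := by
  rcases k with _ | k
  · simp
  · rw [derivative_pow, Nat.add_sub_cancel, C_eq_natCast, pow_succ]
    ring

noncomputable def runPoly (n : ℕ) : ℚ[X] :=
  ∑ σ : Equiv.Perm (Fin n), X ^ udRunCount n σ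

noncomputable def peakPoly (n : ℕ) : ℚ[X] :=
  ∑ σ : Equiv.Perm (Fin n), (2 * X) ^ intPeakCount n σ * (1 + X) ^ (n - 1 - intPeakCount n σ)

noncomputable def runOp (n : ℕ) : ℚ[X] →ₗ[ℚ] ℚ[X] :=
  LinearMap.mulLeft ℚ (X - X ^ 3) ∘ₗ derivative + LinearMap.mulLeft ℚ (X + (n : ℚ[X]) * X ^ 2)

noncomputable def peakOp (n : ℕ) : ℚ[X] →ₗ[ℚ] ℚ[X] :=
  LinearMap.mulLeft ℚ (2 + 2 * X + (2 * (n : ℚ[X]) - 2) * X ^ 2)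
    + LinearMap.mulLeft ℚ (2 * X - 2 * X ^ 3) ∘ₗ derivative

lemma runOp_apply (n : ℕ) (f : ℚ[X]) :
    runOp n f = (X - X ^ 3) * derivative f + (X + (n : ℚ[X]) * X ^ 2) * f := rfl

lemma peakOp_apply (n : ℕ) (f : ℚ[X]) :
    peakOp n f = (2 + 2 * X + (2 * (n : ℚ[X]) - 2) * X ^ 2) * f
      + (2 * X - 2 * X ^ 3) * derivative f := rfl

lemma two_mul_runOp_X_mul (n : ℕ) (f : ℚ[X]) : 2 * runOp n (X * f) = X * peakOp n f := by
  rw [runOp_apply, peakOp_apply, derivative_mul, derivative_X]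
  ring

lemma runOp_X_pow {n u : ℕ} (hu : u ≤ n) :
    runOp n (X ^ u) = u • X ^ u + X ^ (u + 1) + (n - u) • X ^ (u + 2) := by
  have h := mul_derivative_pow (X : ℚ[X]) u
  rw [derivative_X, mul_one] at h
  rw [runOp_apply, nsmul_eq_mul, nsmul_eq_mul, Nat.cast_sub hu]
  linear_combination (1 - X ^ 2) * h

lemma peakOp_peak_term {n k : ℕ} (hk : 2 * k < n) :
    peakOp n ((2 * X) ^ k * (1 + X) ^ (n - 1 - k))
      = (2 * k + 2) • ((2 * X) ^ k * (1 + X) ^ (n - k))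
        + (n - 1 - 2 * k) • ((2 * X) ^ (k + 1) * (1 + X) ^ (n - (k + 1))) := by
  obtain ⟨e, rfl⟩ : ∃ e, n = k + e + 1 := ⟨n - 1 - k, by omega⟩
  have h1 := mul_derivative_pow (2 * X : ℚ[X]) k
  have h2 := mul_derivative_pow (1 + X : ℚ[X]) e
  simp only [derivative_mul, derivative_add, derivative_X, derivative_one, derivative_ofNat,
    zero_mul, zero_add, mul_one] at h1 h2
  rw [show k + e + 1 - 1 - k = e by omega, show k + e + 1 - k = e + 1 by omega,
    show k + e + 1 - (k + 1) = e by omega, show k + e + 1 - 1 - 2 * k = e - k by omega,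
    peakOp_apply, derivative_mul, nsmul_eq_mul, nsmul_eq_mul, Nat.cast_sub (by omega)]
  push_cast
  linear_combination (1 - X ^ 2) * (1 + X) ^ e * h1 + 2 * X * (1 - X) * (2 * X) ^ k * h2

lemma runPoly_succ {n : ℕ} (hn : 1 ≤ n) : runPoly (n + 1) = runOp n (runPoly n) := by
  rw [runPoly, sum_perm_succ, runPoly, map_sum]
  refine sum_congr rfl fun τ _ => ?_
  rw [sum_insMax_udRunCount hn τ (X ^ ·), runOp_X_pow (udRunCount_le τ)]

lemma peakPoly_succ {n : ℕ} (hn : 1 ≤ n) : peakPoly (n + 1) = peakOp n (peakPoly n) := by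
  rw [peakPoly, sum_perm_succ, peakPoly, map_sum]
  refine sum_congr rfl fun τ _ => ?_
  have := two_mul_intPeakCount_le τ
  rw [sum_insMax_intPeakCount hn τ fun k => (2 * X) ^ k * (1 + X) ^ (n + 1 - 1 - k),
    peakOp_peak_term (by omega)]
  simp only [Nat.add_sub_cancel]

lemma two_pow_mul_runPoly (n : ℕ) : 2 ^ n * runPoly (n + 1) = X * peakPoly (n + 1) := by
  induction n with
  | zero => simp [runPoly, peakPoly, udRunCount, intPeakCount]
  | succ n ih =>
    have hlin : (2 : ℚ[X]) ^ n * runOp (n + 1) (runPoly (n + 1))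
        = runOp (n + 1) (2 ^ n * runPoly (n + 1)) := by
      simp only [← C_ofNat, ← C_pow, ← smul_eq_C_mul, map_smul]
    rw [runPoly_succ (by omega), peakPoly_succ (by omega), pow_succ', mul_assoc, hlin, ih,
      two_mul_runOp_X_mul]

/-- for `n ≥ 1`,
`2^{n−1}·Λ_n(x) = x·Σ_{k=0}^{⌊(n−1)/2⌋} M(n,k)·(2x)^k·(1+x)^{n−1−k}` in `ℚ[x]`. -/
theorem stmt_17 (n : ℕ) (hn : 1 ≤ n) :
    (2 : Polynomial ℚ) ^ (n - 1) * UDpoly n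
      = Polynomial.X * ∑ k ∈ Finset.range ((n - 1) / 2 + 1),
          (intPeakNum n k : Polynomial ℚ) * (2 * Polynomial.X) ^ k
            * (1 + Polynomial.X) ^ (n - 1 - k) := by
  have hrun : UDpoly n = runPoly n :=
    sum_card_fiber_mul _ (fun σ => Nat.lt_succ_of_le (udRunCount_le σ)) _
  have hpeak : ∑ k ∈ range ((n - 1) / 2 + 1), (intPeakNum n k : ℚ[X]) * (2 * X) ^ k
      * (1 + X) ^ (n - 1 - k) = peakPoly n := by
    simp only [mul_assoc]
    exact sum_card_fiber_mul _ (fun σ => by have := two_mul_intPeakCount_le σ; omega) _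
  obtain ⟨m, rfl⟩ : ∃ m, n = m + 1 := ⟨n - 1, by omega⟩
  rw [hrun, hpeak, Nat.add_sub_cancel]
  exact two_pow_mul_runPoly m
end
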